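/- Let P be a group of errors with |P| > 2 and C an [[n,k]] encoder with degenerate distance d_q ≥ 2. Then there exists a constant c with 0 < c < 1 such that for every N ≥ 1 and every d ≥ 0: a^{⊗N}(d) ≤ c^d · (|P|−1)^d · binom(Nn, d). -/

import Mathlib

open scoped BigOperators

namespace Turbo

variable {P : Type} [Group P]

/-- Weight of an error: the number of non-identity coordinates. -/
noncomputable def wt {n : ℕ} (E : Fin n → P) : ℕ := {i | E i ≠ 1}.ncard

/-- Pad a finite sequence of blocks to an infinite one by identity blocks. -/
def pad {β : Type} [One β] {N : ℕ} (x : Fin N → β) : ℕ → β :=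
  fun i => if h : i < N then x ⟨i, h⟩ else 1

/-- All blocks of a stabilizer sequence have coordinates in `Z`. -/
def ZValued (Z : Subgroup P) {s : ℕ} (S : ℕ → Fin s → P) : Prop := ∀ i j, S i j ∈ Z

/-- Intermediate memory error `M_i` of a convolutional morphism built from the seed `F`. -/
def convMem {m k s n : ℕ}
    (F : ((Fin m → P) × (Fin k → P) × (Fin s → P)) → ((Fin n → P) × (Fin m → P)))
    (M : Fin m → P) (L : ℕ → Fin k → P) (S : ℕ → Fin s → P) : ℕ → Fin m → P
  | 0 => M
  | i + 1 => (F (convMem F M L S i, L i, S i)).2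

/-- The `i`-th physical output block `P_{i+1}` of the convolutional morphism. -/
def convOut {m k s n : ℕ}
    (F : ((Fin m → P) × (Fin k → P) × (Fin s → P)) → ((Fin n → P) × (Fin m → P)))
    (M : Fin m → P) (L : ℕ → Fin k → P) (S : ℕ → Fin s → P) (i : ℕ) : Fin n → P :=
  (F (convMem F M L S i, L i, S i)).1

/-- Weight of the physical output `π_N` (first `N` physical blocks). -/
noncomputable def outWt {m k s n : ℕ}
    (F : ((Fin m → P) × (Fin k → P) × (Fin s → P)) → ((Fin n → P) × (Fin m → P)))
    (M : Fin m → P) (L : ℕ → Fin k → P) (S : ℕ → Fin s → P) (N : ℕ) : ℕ :=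
  ∑ i ∈ Finset.range N, wt (convOut F M L S i)

/-- Weight of the full output `𝒞_N(E) = (P_1, …, P_N, M_N)`. -/
noncomputable def fullWt {m k s n : ℕ}
    (F : ((Fin m → P) × (Fin k → P) × (Fin s → P)) → ((Fin n → P) × (Fin m → P)))
    (M : Fin m → P) (L : ℕ → Fin k → P) (S : ℕ → Fin s → P) (N : ℕ) : ℕ :=
  outWt F M L S N + wt (convMem F M L S N)

/-- The output `𝒞_∞(E)` of the infinite convolutional morphism has infinite weight. -/
def InfOutput {m k s n : ℕ}
    (F : ((Fin m → P) × (Fin k → P) × (Fin s → P)) → ((Fin n → P) × (Fin m → P)))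
    (M : Fin m → P) (L : ℕ → Fin k → P) (S : ℕ → Fin s → P) : Prop :=
  {i : ℕ | convOut F M L S i ≠ 1}.Infinite

/-- The information part of an infinite input has exactly one non-identity letter. -/
def OneInfoLetter {k : ℕ} (L : ℕ → Fin k → P) : Prop :=
  ∃! p : ℕ × Fin k, L p.1 p.2 ≠ 1

/-- A recursive `[[n,k,s,m]]` morphism. -/
def Recursive {m k s n : ℕ} (Z : Subgroup P)
    (F : ((Fin m → P) × (Fin k → P) × (Fin s → P)) → ((Fin n → P) × (Fin m → P))) : Prop :=
  ∀ (L : ℕ → Fin k → P) (S : ℕ → Fin s → P),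
    OneInfoLetter L → ZValued Z S → InfOutput F 1 L S

/-- A systematic morphism: the output weight dominates the information weight. -/
def Systematic {m k s n : ℕ}
    (F : ((Fin m → P) × (Fin k → P) × (Fin s → P)) → ((Fin n → P) × (Fin m → P))) : Prop :=
  ∀ (N : ℕ) (M : Fin m → P) (L : ℕ → Fin k → P) (S : ℕ → Fin s → P),
    (∑ i ∈ Finset.range N, wt (L i)) ≤ fullWt F M L S N

/-- The set `M₁` of memory errors giving an infinite output on trivial information input. -/
def M1 {m k s n : ℕ} (Z : Subgroup P)
    (F : ((Fin m → P) × (Fin k → P) × (Fin s → P)) → ((Fin n → P) × (Fin m → P))) :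
    Set (Fin m → P) :=
  {M | ∀ S : ℕ → Fin s → P, ZValued Z S → InfOutput F M 1 S}

/-- The set of candidate speeds of a morphism. -/
def speedSet {m k s n : ℕ} (Z : Subgroup P)
    (F : ((Fin m → P) × (Fin k → P) × (Fin s → P)) → ((Fin n → P) × (Fin m → P))) : Set ℕ :=
  {η | 0 < η ∧ ∀ M ∈ M1 Z F, ∀ S : ℕ → Fin s → P, ZValued Z S → 1 ≤ outWt F M 1 S η}

/-- `η` is the speed of the morphism `F`. -/
def IsSpeed {m k s n : ℕ} (Z : Subgroup P)
    (F : ((Fin m → P) × (Fin k → P) × (Fin s → P)) → ((Fin n → P) × (Fin m → P)))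
    (η : ℕ) : Prop :=
  IsLeast (speedSet Z F) η

/-- The set `𝕀` of memory errors accessible from the identity memory with trivial
information and `Z`-valued stabilizers. -/
def Iset {m k s n : ℕ} (Z : Subgroup P)
    (F : ((Fin m → P) × (Fin k → P) × (Fin s → P)) → ((Fin n → P) × (Fin m → P))) :
    Set (Fin m → P) :=
  {M | ∃ (N : ℕ) (S : ℕ → Fin s → P), ZValued Z S ∧ M = convMem F 1 1 S N}

/- ### Block `[[n,k]]` encoders -/

/-- `E` is undetected for the `[[n,k]]` encoder `C`. -/
def Undetected {k n : ℕ} (Z : Subgroup P)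
    (C : ((Fin k → P) × (Fin (n - k) → P)) ≃* (Fin n → P)) (E : Fin n → P) : Prop :=
  E ≠ 1 ∧ ∀ j, (C.symm E).2 j ∈ Z

/-- `E` is harmful for the `[[n,k]]` encoder `C`. -/
def Harmful {k n : ℕ} (Z : Subgroup P)
    (C : ((Fin k → P) × (Fin (n - k) → P)) ≃* (Fin n → P)) (E : Fin n → P) : Prop :=
  Undetected Z C E ∧ (C.symm E).1 ≠ 1

/-- The distance `d_c` of an `[[n,k]]` encoder. -/
noncomputable def encDist {k n : ℕ} (Z : Subgroup P)
    (C : ((Fin k → P) × (Fin (n - k) → P)) ≃* (Fin n → P)) : ℕ :=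
  sInf {w | ∃ E, Harmful Z C E ∧ wt E = w}

/-- The degenerate distance `d_q` of an `[[n,k]]` encoder. -/
noncomputable def encDegenDist {k n : ℕ} (Z : Subgroup P)
    (C : ((Fin k → P) × (Fin (n - k) → P)) ≃* (Fin n → P)) : ℕ :=
  sInf {w | ∃ E, Undetected Z C E ∧ wt E = w}

/-- Weight distribution `a^{⊗N}(d)` of the blockwise encoder `C^{⊗N}`. -/
noncomputable def aTensor {k n : ℕ} (Z : Subgroup P)
    (C : ((Fin k → P) × (Fin (n - k) → P)) ≃* (Fin n → P)) (N d : ℕ) : ℕ :=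
  Set.ncard {E : (Fin N → Fin k → P) × (Fin N → Fin (n - k) → P) |
    (∀ i j, E.2 i j ∈ Z) ∧ E.1 ≠ 1 ∧ (∑ i, wt (C (E.1 i, E.2 i))) = d}

/- ### `[[n,k,m]]` encoders and their truncated decoders -/

/-- The truncated decoder `C̄` of an `[[n,k,m]]` encoder `C`, as a `[[k,n,0,m]]` morphism. -/
def truncDecoder {m k n : ℕ}
    (C : ((Fin m → P) × (Fin k → P) × (Fin (n - k) → P)) ≃* ((Fin n → P) × (Fin m → P))) :
    ((Fin m → P) × (Fin n → P) × (Fin 0 → P)) → ((Fin k → P) × (Fin m → P)) :=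
  fun x => ((C.symm (x.2.1, x.1)).2.1, (C.symm (x.2.1, x.1)).1)

/-- Weight distribution `a_N(w, d)` of a convolutional morphism. -/
noncomputable def aN {m k s n : ℕ} (Z : Subgroup P)
    (F : ((Fin m → P) × (Fin k → P) × (Fin s → P)) → ((Fin n → P) × (Fin m → P)))
    (N w d : ℕ) : ℕ :=
  Set.ncard {ML : (Fin m → P) × (Fin N → Fin k → P) |
    (wt ML.1 + ∑ i, wt (ML.2 i)) = w ∧
    ∃ S : Fin N → Fin s → P, (∀ i j, S i j ∈ Z) ∧
      fullWt F ML.1 (pad ML.2) (pad S) N = d}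

/-- Weight distribution `a_N(w, ≤ d)` of a convolutional morphism. -/
noncomputable def aNle {m k s n : ℕ} (Z : Subgroup P)
    (F : ((Fin m → P) × (Fin k → P) × (Fin s → P)) → ((Fin n → P) × (Fin m → P)))
    (N w : ℕ) (d : ℝ) : ℕ :=
  Set.ncard {ML : (Fin m → P) × (Fin N → Fin k → P) |
    (wt ML.1 + ∑ i, wt (ML.2 i)) = w ∧
    ∃ S : Fin N → Fin s → P, (∀ i j, S i j ∈ Z) ∧
      (fullWt F ML.1 (pad ML.2) (pad S) N : ℝ) ≤ d}

/- ### Traces and detours -/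

/-- Replace every information letter at (1-indexed flattened) position `> p` by the identity. -/
def truncAfter {k : ℕ} (L : ℕ → Fin k → P) (p : ℕ) : ℕ → Fin k → P :=
  fun i j => if i * k + (j : ℕ) + 1 ≤ p then L i j else 1

/-- `q` is the (1-indexed flattened) position of a non-identity information letter of the
first `N` information blocks. -/
def IsInfoPos {k : ℕ} (N : ℕ) (L : ℕ → Fin k → P) (q : ℕ) : Prop :=
  ∃ (i : ℕ) (j : Fin k), i < N ∧ q = i * k + (j : ℕ) + 1 ∧ L i j ≠ 1

/-- The information part of the `i`-th truncature `E_{∖i}`. -/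
def truncInfo {k : ℕ} (L : ℕ → Fin k → P) (p : ℕ → ℕ) : ℕ → (ℕ → Fin k → P)
  | 0 => 1
  | i + 1 => truncAfter L (p i)

/-- The number `N_i` of blocks making up the `i`-th truncature (with `N_0 = 0`):
the block containing the position `p i`. -/
def cutOf (k : ℕ) (p : ℕ → ℕ) : ℕ → ℕ
  | 0 => 0
  | i + 1 => (p i - 1) / k + 1

/-- Extend a stabilizer sequence: the first `cut` blocks come from `S`, the rest from `St`. -/
def extendS {s : ℕ} (S : ℕ → Fin s → P) (cut : ℕ) (St : ℕ → Fin s → P) : ℕ → Fin s → P :=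
  fun j => if j < cut then S j else St (j - cut)

/-- The intermediate memory error `M_i` attached to the `i`-th truncature `E_{∖i}`. -/
def traceMem {m k s n : ℕ}
    (F : ((Fin m → P) × (Fin k → P) × (Fin s → P)) → ((Fin n → P) × (Fin m → P)))
    (M : Fin m → P) (L : ℕ → Fin k → P) (S : ℕ → Fin s → P) (p : ℕ → ℕ) : ℕ → Fin m → P
  | 0 => M
  | i + 1 => convMem F M (truncAfter L (p i)) S ((p i - 1) / k + 1)

/-- Paper-indexed positions: `pp p 0 = 0` and `pp p j = p (j-1)` for `j ≥ 1`. -/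
def pp (p : ℕ → ℕ) : ℕ → ℕ
  | 0 => 0
  | j + 1 => p j

/-- The segment `[a, c)` of the trace `b` is a terminating detour: a nonempty run of `1`'s
followed by a single final `0`. -/
def IsTermDetour (b : ℕ → Prop) (a c : ℕ) : Prop :=
  a + 1 < c ∧ (∀ t, a ≤ t → t + 1 < c → b t) ∧ ¬ b (c - 1)

/-- The segment `[a, c)` of the trace `b` is a detour: a nonempty run of `1`'s, possibly
completed with a single final `0`. -/
def IsDetour (b : ℕ → Prop) (a c : ℕ) : Prop :=
  (a < c ∧ ∀ t, a ≤ t → t < c → b t) ∨ IsTermDetour b a c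

end Turbo

/-!
Write `q = |P| - 1`. Since `d_q ≥ 2`, two blocks whose syndromes lie in `Z` and which differ in
at most one coordinate are equal. Hence an output of `C^{⊗N}` with support `A` is determined by
its values, all non-identity, on `A` minus the last support position of each block. A support of
size `d` meets at least `d / n` blocks, so at most `q ^ (d - d / n)` outputs have support `A`;
summing over the `binom(Nn, d)` supports gives the bound with `c = q ^ (-1 / (n + 1))`, the
shift to `n + 1` making the case `n = 0` harmless.
-/

open Finset Function

namespace Turbo

def HasZSyndrome {P : Type} [Group P] {k n : ℕ} (Z : Subgroup P)
    (C : ((Fin k → P) × (Fin (n - k) → P)) ≃* (Fin n → P)) (u : Fin n → P) : Prop :=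
  ∀ j, (C.symm u).2 j ∈ Z

theorem eq_of_disagreement_subsingleton {P : Type} [Group P] {k n : ℕ} {Z : Subgroup P}
    {C : ((Fin k → P) × (Fin (n - k) → P)) ≃* (Fin n → P)} (hdq : 2 ≤ encDegenDist Z C)
    {u v : Fin n → P} (hu : HasZSyndrome Z C u) (hv : HasZSyndrome Z C v)
    (huv : {j | u j ≠ v j}.Subsingleton) : u = v := by
  by_contra hne
  have hund : Undetected Z C (u * v⁻¹) := by
    refine ⟨fun h => hne (mul_inv_eq_one.mp h), fun j => ?_⟩
    rw [map_mul, map_inv]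
    exact Z.mul_mem (hu j) (Z.inv_mem (hv j))
  have hwt : wt (u * v⁻¹) ≤ 1 := by
    have hset : {j | (u * v⁻¹) j ≠ 1} = {j | u j ≠ v j} := by
      ext j; simp [mul_inv_eq_one]
    rw [wt, hset]
    exact Set.ncard_le_one_iff_subsingleton.mpr huv
  have hdq_le : encDegenDist Z C ≤ wt (u * v⁻¹) := Nat.sInf_le ⟨_, hund, rfl⟩
  omega

end Turbo

section RowLast

variable {α β : Type*} [DecidableEq α] [LinearOrder β]

def rowLast (A : Finset (α × β)) : Finset (α × β) :=
  A.filter fun p => ∀ q ∈ A, q.1 = p.1 → q.2 ≤ p.2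

theorem rowLast_subset (A : Finset (α × β)) : rowLast A ⊆ A := filter_subset _ _

theorem subsingleton_rowLast_row (A : Finset (α × β)) (i : α) :
    {j | (i, j) ∈ rowLast A}.Subsingleton := by
  intro j hj j' hj'
  simp only [rowLast, Set.mem_ofPred_eq, mem_filter] at hj hj'
  exact le_antisymm (hj'.2 _ hj.1 rfl) (hj.2 _ hj'.1 rfl)

theorem card_le_card_rowLast_mul [Fintype β] (A : Finset (α × β)) :
    #A ≤ #(rowLast A) * Fintype.card β := by
  have hcover : A ⊆ (rowLast A).image Prod.fst ×ˢ univ := by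
    intro p hp
    obtain ⟨x, hx, hmax⟩ := exists_max_image (A.filter fun q => q.1 = p.1) Prod.snd
      ⟨p, mem_filter.mpr ⟨hp, rfl⟩⟩
    rw [mem_filter] at hx
    refine mem_product.mpr ⟨mem_image.mpr ⟨x, mem_filter.mpr ⟨hx.1, ?_⟩, hx.2⟩, mem_univ _⟩
    intro q hq hqx
    exact hmax q (mem_filter.mpr ⟨hq, hqx.trans hx.2⟩)
  calc #A ≤ #((rowLast A).image Prod.fst ×ˢ (univ : Finset β)) := card_le_card hcover
    _ ≤ #(rowLast A) * Fintype.card β := by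
      rw [card_product, card_univ]
      exact Nat.mul_le_mul_right _ card_image_le

theorem succ_mul_card_sdiff_rowLast_le [Fintype β] (A : Finset (α × β)) :
    (Fintype.card β + 1) * #(A \ rowLast A) ≤ Fintype.card β * #A := by
  have hA := card_le_card_rowLast_mul A
  obtain ⟨t, ht⟩ := Nat.exists_eq_add_of_le (card_le_card (rowLast_subset A))
  rw [card_sdiff_of_subset (rowLast_subset A), ht, Nat.add_sub_cancel_left]
  rw [ht] at hA
  nlinarith

end RowLast

section SupportCounting

variable {ι P : Type*} [Fintype ι] [DecidableEq P] [One P]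

def finMulSupport (g : ι → P) : Finset ι := {p | g p ≠ 1}

@[simp]
theorem mem_finMulSupport {g : ι → P} {p : ι} : p ∈ finMulSupport g ↔ g p ≠ 1 := by
  simp [finMulSupport]

variable [DecidableEq ι] [Fintype P]

theorem card_filter_finMulSupport_eq_le (S : Finset (ι → P)) {A B : Finset ι} (hBA : B ⊆ A)
    (hdet : ∀ g ∈ S, ∀ g' ∈ S, finMulSupport g = A → finMulSupport g' = A →
      (∀ p ∈ B, g p = g' p) → g = g') :
    #(S.filter fun g => finMulSupport g = A) ≤ (Fintype.card P - 1) ^ #B := by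
  set T := S.filter fun g => finMulSupport g = A
  have hne : ∀ g ∈ T, ∀ p ∈ B, g p ≠ 1 := fun g hg p hp =>
    mem_finMulSupport.mp ((mem_filter.mp hg).2 ▸ hBA hp)
  let restrict (g : T) (p : B) : {y : P // y ≠ 1} := ⟨g.1 p, hne g.1 g.2 p p.2⟩
  have hinj : Injective restrict := by
    rintro ⟨g, hg⟩ ⟨g', hg'⟩ h
    rw [mem_filter] at hg hg'
    refine Subtype.ext (hdet g hg.1 g' hg'.1 hg.2 hg'.2 fun p hp => ?_)
    simpa [restrict] using congrFun h ⟨p, hp⟩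
  simpa [Fintype.card_subtype_compl] using Fintype.card_le_of_injective restrict hinj

theorem card_filter_card_finMulSupport_le (S : Finset (ι → P)) (B : Finset ι → Finset ι)
    (hB : ∀ A, B A ⊆ A)
    (hdet : ∀ A, ∀ g ∈ S, ∀ g' ∈ S, finMulSupport g = A → finMulSupport g' = A →
      (∀ p ∈ B A, g p = g' p) → g = g') (d : ℕ) :
    #(S.filter fun g => #(finMulSupport g) = d) ≤
      ∑ A ∈ powersetCard d univ, (Fintype.card P - 1) ^ #(B A) := by
  rw [card_eq_sum_card_fiberwise (f := finMulSupport) (t := powersetCard d univ)]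
  · refine sum_le_sum fun A _ => le_trans (card_le_card fun g hg => ?_)
      (card_filter_finMulSupport_eq_le S (hB A) (hdet A))
    simp only [mem_filter] at hg ⊢
    exact ⟨hg.1.1, hg.2⟩
  · intro g hg
    simpa using (mem_filter.mp (mem_coe.mp hg)).2

end SupportCounting

theorem pow_le_rpow_neg_inv_succ_pow_mul_pow {x : ℝ} (hx : 1 ≤ x) {m b d : ℕ}
    (h : (m + 1) * b ≤ m * d) : x ^ b ≤ (x ^ (-1 / (m + 1 : ℝ))) ^ d * x ^ d := by
  have hx0 : 0 < x := by linarith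
  rw [← mul_pow, ← Real.rpow_add_one hx0.ne', ← Real.rpow_natCast, ← Real.rpow_natCast,
    ← Real.rpow_mul hx0.le]
  refine Real.rpow_le_rpow_of_exponent_le hx ?_
  have h' : ((m : ℝ) + 1) * b ≤ m * d := by exact_mod_cast h
  rw [neg_div, neg_add_eq_sub, one_sub_div (by positivity), add_sub_cancel_right,
    div_mul_eq_mul_div, le_div_iff₀ (by positivity)]
  linarith

namespace Turbo

variable {P : Type} [Group P] [DecidableEq P]

theorem wt_eq_card_finMulSupport {n : ℕ} (E : Fin n → P) : wt E = #(finMulSupport E) := by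
  rw [wt, ← Set.ncard_coe_finset]
  congr 1
  ext i
  simp

theorem card_finMulSupport_eq_sum_wt {α : Type*} [Fintype α] {n : ℕ} (g : α × Fin n → P) :
    #(finMulSupport g) = ∑ i, wt fun j => g (i, j) := by
  simp only [wt_eq_card_finMulSupport, finMulSupport, card_filter]
  exact Fintype.sum_prod_type _

variable {k n : ℕ} {Z : Subgroup P} {C : ((Fin k → P) × (Fin (n - k) → P)) ≃* (Fin n → P)}

def blockwiseEncode (C : ((Fin k → P) × (Fin (n - k) → P)) ≃* (Fin n → P)) {N : ℕ}
    (E : (Fin N → Fin k → P) × (Fin N → Fin (n - k) → P)) : Fin N × Fin n → P :=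
  fun p => C (E.1 p.1, E.2 p.1) p.2

theorem eq_of_eqOn_sdiff_rowLast (hdq : 2 ≤ encDegenDist Z C) {N : ℕ}
    {A : Finset (Fin N × Fin n)} {g g' : Fin N × Fin n → P}
    (hg : ∀ i, HasZSyndrome Z C fun j => g (i, j)) (hg' : ∀ i, HasZSyndrome Z C fun j => g' (i, j))
    (hA : finMulSupport g = A) (hA' : finMulSupport g' = A)
    (heq : ∀ p ∈ A \ rowLast A, g p = g' p) : g = g' := by
  funext ⟨i, j⟩
  refine congrFun (eq_of_disagreement_subsingleton hdq (hg i) (hg' i)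
    ((subsingleton_rowLast_row A i).anti fun j hj => ?_)) j
  by_contra hlast
  by_cases hj' : (i, j) ∈ A
  · exact hj (heq _ (mem_sdiff.mpr ⟨hj', hlast⟩))
  · have h1 : g (i, j) = 1 := by simpa [← hA] using hj'
    have h2 : g' (i, j) = 1 := by simpa [← hA'] using hj'
    exact hj (h1.trans h2.symm)

open Classical in
theorem aTensor_le_card [Fintype P] (N d : ℕ) :
    aTensor Z C N d ≤
      #((univ.filter fun g : Fin N × Fin n → P => ∀ i, HasZSyndrome Z C fun j => g (i, j)).filter
        fun g => #(finMulSupport g) = d) := by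
  rw [aTensor, ← Set.ncard_coe_finset]
  refine Set.ncard_le_ncard_of_injOn (blockwiseEncode C) ?_ ?_ (Set.toFinite _)
  · rintro E ⟨hZ, -, hd⟩
    simp only [coe_filter, mem_filter, mem_univ, true_and, Set.mem_ofPred_eq]
    refine ⟨fun i j => ?_, ?_⟩
    · simpa [HasZSyndrome, blockwiseEncode] using hZ i j
    · rw [card_finMulSupport_eq_sum_wt, ← hd]
      rfl
  · intro E _ E' _ h
    have hblock : ∀ i, (E.1 i, E.2 i) = (E'.1 i, E'.2 i) := fun i =>
      C.injective (funext fun j => congrFun h (i, j))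
    exact Prod.ext (funext fun i => (Prod.ext_iff.mp (hblock i)).1)
      (funext fun i => (Prod.ext_iff.mp (hblock i)).2)

end Turbo

open Turbo in
theorem bound_2E_general {P : Type} [Group P] [Finite P] (Z : Subgroup P)
    (hP : 2 < Nat.card P)
    {k n : ℕ}
    (C : ((Fin k → P) × (Fin (n - k) → P)) ≃* (Fin n → P))
    (hdq : 2 ≤ encDegenDist Z C) :
    ∃ c : ℝ, 0 < c ∧ c < 1 ∧ ∀ N : ℕ, 1 ≤ N → ∀ d : ℕ,
      (aTensor Z C N d : ℝ) ≤
        c ^ d * ((Nat.card P : ℝ) - 1) ^ d * ((N * n).choose d : ℝ) := by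
  classical
  have := Fintype.ofFinite P
  rw [Nat.card_eq_fintype_card] at hP ⊢
  set q : ℝ := Fintype.card P - 1
  have hq : ((Fintype.card P - 1 : ℕ) : ℝ) = q := by
    rw [Nat.cast_sub (by omega), Nat.cast_one]
  have hq1 : 1 < q := by
    rw [← hq]
    exact_mod_cast (by omega : 1 < Fintype.card P - 1)
  refine ⟨q ^ (-1 / (n + 1 : ℝ)), Real.rpow_pos_of_pos (by linarith) _,
    Real.rpow_lt_one_of_one_lt_of_neg hq1 (div_neg_of_neg_of_pos (by norm_num) (by positivity)),
    fun N _ d => ?_⟩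
  have hcount := (aTensor_le_card (C := C) N d).trans
    (card_filter_card_finMulSupport_le _ (fun A => A \ rowLast A) (fun _ => sdiff_subset)
      (fun _ g hg g' hg' =>
        eq_of_eqOn_sdiff_rowLast hdq (mem_filter.mp hg).2 (mem_filter.mp hg').2) d)
  calc (aTensor Z C N d : ℝ)
      ≤ ∑ A ∈ powersetCard d (univ : Finset (Fin N × Fin n)), q ^ #(A \ rowLast A) := by
        rw [← hq]; exact_mod_cast hcount
    _ ≤ ∑ A ∈ powersetCard d (univ : Finset (Fin N × Fin n)),
          (q ^ (-1 / (n + 1 : ℝ))) ^ d * q ^ d := by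
        refine sum_le_sum fun A hA => pow_le_rpow_neg_inv_succ_pow_mul_pow hq1.le ?_
        simpa [(mem_powersetCard.mp hA).2] using succ_mul_card_sdiff_rowLast_le A
    _ = _ := by
        rw [sum_const, card_powersetCard, card_univ, Fintype.card_prod, Fintype.card_fin,
          Fintype.card_fin, nsmul_eq_mul]
        ring

open Turbo in
/-- Bound 2E: weight distribution of the blockwise outer encoder when `|P| > 2`. -/
theorem bound_2E {P : Type} [Group P] [Finite P] (Z : Subgroup P) (hZ : Z ≠ ⊤)
    (hP : 2 < Nat.card P)
    {k n : ℕ} (hkn : k ≤ n)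
    (C : ((Fin k → P) × (Fin (n - k) → P)) ≃* (Fin n → P))
    (hdq : 2 ≤ encDegenDist Z C) :
    ∃ c : ℝ, 0 < c ∧ c < 1 ∧ ∀ N : ℕ, 1 ≤ N → ∀ d : ℕ,
      (aTensor Z C N d : ℝ) ≤
        c ^ d * ((Nat.card P : ℝ) - 1) ^ d * ((N * n).choose d : ℝ) :=
  bound_2E_general Z hP C hdq
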